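/- (Correctness of the abstract path-fixing algorithm) Given a directed graph G with capacities c, a simple path P with nodes p_1, ..., p_{k+1}, and a pseudoflow f_0, the abstract fixing procedure outputs a pseudoflow f' such that: (i) f' - f_0 satisfies conservation at all nodes not on P, and (ii) with respect to f', there is no residual path from any node of P with positive inflow to any node of P with negative inflow. -/

import Mathlib

/-- A directed graph given by darts: each dart has a tail, a head, and a reverse dart. -/
structure Dgraph (V D : Type) where
  tail : D → V
  head : D → V
  rev : D → D
  rev_rev : ∀ d, rev (rev d) = d
  tail_rev : ∀ d, tail (rev d) = head d
  head_rev : ∀ d, head (rev d) = tail d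

namespace Dgraph

variable {V D : Type}

/-- an antisymmetric flow assignment -/
def Antisym (G : Dgraph V D) (f : D → ℝ) : Prop :=
  ∀ d, f (G.rev d) = - f d

/-- net inflow of a flow assignment at a node -/
noncomputable def inflow [Fintype D] [DecidableEq V] (G : Dgraph V D) (f : D → ℝ) (v : V) : ℝ :=
  ∑ d ∈ Finset.univ.filter (fun d => G.head d = v), f d

/-- one step along a dart of strictly positive capacity -/
def ResStep (G : Dgraph V D) (cap : D → ℝ) (u v : V) : Prop :=
  ∃ d, G.tail d = u ∧ G.head d = v ∧ 0 < cap d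

/-- existence of a path all of whose darts have strictly positive capacity -/
def ResReach (G : Dgraph V D) (cap : D → ℝ) (u v : V) : Prop :=
  Relation.ReflTransGen (G.ResStep cap) u v

/-- a pseudoflow: antisymmetric and respecting all capacities -/
def Pseudoflow (G : Dgraph V D) (c f : D → ℝ) : Prop :=
  G.Antisym f ∧ ∀ d, f d ≤ c d

end Dgraph

namespace Dgraph

variable {V D : Type} [Fintype D] [DecidableEq V] [DecidableEq D]

/-- `g` is a maximum feasible flow from `a` to `b` with limit `x` (w.r.t. capacities `cap`). -/
def MaxLimFlow (G : Dgraph V D) (cap : D → ℝ) (a b : V) (x : ℝ) (g : D → ℝ) : Prop :=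
  G.Antisym g ∧ (∀ d, g d ≤ cap d) ∧
  (∀ v, v ≠ a → v ≠ b → G.inflow g v = 0) ∧
  G.inflow g b ≤ x ∧
  ∀ g' : D → ℝ, G.Antisym g' → (∀ d, g' d ≤ cap d) →
    (∀ v, v ≠ a → v ≠ b → G.inflow g' v = 0) →
    G.inflow g' b ≤ x → G.inflow g' b ≤ G.inflow g b

/-- capacities at stage `i` of the abstract fixing procedure: darts of the path with
index at least `i` (and their reverses) still carry the extra capacity `M`. -/
noncomputable def fixCaps (G : Dgraph V D) (c0 : D → ℝ) (M : ℝ) {k : ℕ}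
    (dP : Fin k → D) (i : ℕ) (d : D) : ℝ :=
  c0 d + (if ∃ j : Fin k, i ≤ (j : ℕ) ∧ (d = dP j ∨ d = G.rev (dP j)) then M else 0)

/-- restoring the capacity of the dart `d0` and of `rev d0`: truncate the flow on each
of them in turn to the (restored) capacity `κ`, keeping antisymmetry. -/
noncomputable def truncAt (G : Dgraph V D) (κ : D → ℝ) (f : D → ℝ) (d0 : D) : D → ℝ :=
  let m := min (f d0) (κ d0)
  let f1 := Function.update (Function.update f d0 m) (G.rev d0) (-m)
  let m2 := min (f1 (G.rev d0)) (κ (G.rev d0))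
  Function.update (Function.update f1 (G.rev d0) m2) d0 (-m2)

/-- one iteration of the abstract fixing procedure at position `i`: restore the
capacities of `d_i` and `rev d_i`, then push a maximum flow with limit `|inflow(p_i)|`
from `p_i` to `p_{i+1}` (if the inflow at `p_i` is positive) or from `p_{i+1}` to `p_i`
(otherwise). -/
noncomputable def FixStep (G : Dgraph V D) (c0 : D → ℝ) (M : ℝ) {k : ℕ}
    (p : Fin (k+1) → V) (dP : Fin k → D) (i : Fin k) (f f' : D → ℝ) : Prop :=
  ∃ t g : D → ℝ,
    t = G.truncAt (G.fixCaps c0 M dP ((i : ℕ) + 1)) f (dP i) ∧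
    ((0 < G.inflow t (p i.castSucc) ∧
        G.MaxLimFlow (fun d => G.fixCaps c0 M dP ((i : ℕ) + 1) d - t d)
          (p i.castSucc) (p i.succ) (G.inflow t (p i.castSucc)) g) ∨
     (G.inflow t (p i.castSucc) ≤ 0 ∧
        G.MaxLimFlow (fun d => G.fixCaps c0 M dP ((i : ℕ) + 1) d - t d)
          (p i.succ) (p i.castSucc) (-(G.inflow t (p i.castSucc))) g)) ∧
    f' = fun d => t d + g d

end Dgraph

/-!
After `m` iterations the nodes `p 0, …, p (m-1)` are fixed: a fixed node with positive inflow
reaches, by a residual path, neither a later path node nor a fixed node with negative inflow, and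
symmetrically (`FixInv`). Three facts carry this invariant through the iteration at `p m`.
Pushing flow between `p m` and `p (m+1)` opens no residual path out of a residually closed set
that avoids both nodes, because the net flow leaving such a set vanishes. While the darts of the
unfixed part of the path still carry the surplus `M = ∑ c0`, a residual path entering it from
outside reaches its first node: once the backward dart of `p j → p (j+1)` is saturated, its flow
exceeds what all other darts entering `{p l | j < l}` can compensate, so these are saturated and
the path enters through `p j`. Finally, a maximum flow below its limit leaves no augmenting path,
so a node that keeps positive (negative) inflow after its push cannot reach (be reached from) the
next one.
-/

theorem eventually_mul_le {ι : Type*} [Finite ι] {χ r : ι → ℝ} (hr : ∀ i, 0 ≤ r i)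
    (hχ : ∀ i, 0 < χ i → 0 < r i) :
    ∀ᶠ ε in nhdsWithin (0 : ℝ) (Set.Ioi 0), ∀ i, ε * χ i ≤ r i := by
  refine Filter.eventually_all.2 fun i => ?_
  rcases le_or_gt (χ i) 0 with hi | hi
  · filter_upwards [self_mem_nhdsWithin] with ε hε
    exact (mul_nonpos_of_nonneg_of_nonpos (le_of_lt hε) hi).trans (hr i)
  · have hlim : Filter.Tendsto (fun ε : ℝ => ε * χ i) (nhds 0) (nhds 0) := by
      simpa using (Filter.tendsto_id (x := nhds (0 : ℝ))).mul_const (χ i)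
    exact eventually_nhdsWithin_of_eventually_nhds
      ((hlim.eventually (gt_mem_nhds (hχ i hi))).mono fun _ => le_of_lt)

namespace Dgraph

variable {V D : Type} (G : Dgraph V D)

@[simps]
def reverse : Dgraph V D where
  tail := G.head
  head := G.tail
  rev := G.rev
  rev_rev := G.rev_rev
  tail_rev := G.head_rev
  head_rev := G.tail_rev

variable {G}

theorem rev_involutive : Function.Involutive G.rev := G.rev_rev

theorem rev_injective : Function.Injective G.rev := G.rev_involutive.injective

theorem Antisym.add {f g : D → ℝ} (hf : G.Antisym f) (hg : G.Antisym g) : G.Antisym (f + g) :=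
  fun d => by simp only [Pi.add_apply, hf d, hg d, neg_add]

theorem Antisym.sub {f g : D → ℝ} (hf : G.Antisym f) (hg : G.Antisym g) : G.Antisym (f - g) :=
  fun d => by simp only [Pi.sub_apply, hf d, hg d, neg_sub_neg, neg_sub]

theorem ResReach.mono {r r' : D → ℝ} (h : ∀ d, 0 < r' d → 0 < r d) {u v : V}
    (huv : G.ResReach r' u v) : G.ResReach r u v :=
  Relation.ReflTransGen.mono (fun _ _ ⟨d, ht, hh, hd⟩ => ⟨d, ht, hh, h d hd⟩) u v huv

theorem ResReach.exists_entering {r : D → ℝ} {u z : V} (h : G.ResReach r u z) {S : Set V}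
    (hu : u ∉ S) (hz : z ∈ S) :
    ∃ d, 0 < r d ∧ G.head d ∈ S ∧ G.tail d ∉ S ∧ G.ResReach r u (G.tail d) := by
  induction h with
  | refl => exact absurd hz hu
  | @tail c z hc hstep ih =>
    obtain ⟨d, rfl, rfl, hd⟩ := hstep
    by_cases hcS : G.tail d ∈ S
    · exact ih hcS
    · exact ⟨d, hd, hz, hcS, hc⟩

theorem resReach_reverse {r : D → ℝ} {u v : V} :
    G.reverse.ResReach r u v ↔ G.ResReach r v u := by
  have hstep : G.reverse.ResStep r = Function.swap (G.ResStep r) := by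
    ext u v
    simp only [ResStep, reverse_tail, reverse_head, Function.swap]
    exact exists_congr fun d => by tauto
  rw [ResReach, hstep, Relation.reflTransGen_swap, ResReach]

theorem sum_eq_zero_of_antisym {h : D → ℝ} (hh : G.Antisym h) {s : Finset D}
    (hs : ∀ d ∈ s, G.rev d ∈ s) : ∑ d ∈ s, h d = 0 :=
  Finset.sum_involution (fun d _ => G.rev d) (fun d _ => by rw [hh d, add_neg_cancel])
    (fun d _ hd hrev => hd (by linarith [hh d, congrArg h hrev]))
    hs (fun d _ => G.rev_rev d)

theorem sum_add_rev_le [Fintype D] {c : D → ℝ} (hc : ∀ d, 0 ≤ c d) {A : Finset D}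
    (hA : ∀ d ∈ A, G.rev d ∉ A) : ∑ d ∈ A, (c d + c (G.rev d)) ≤ ∑ d, c d := by
  classical
  have hmap : ∑ d ∈ A, c (G.rev d) = ∑ d ∈ A.map ⟨G.rev, G.rev_injective⟩, c d :=
    (Finset.sum_map A ⟨G.rev, G.rev_injective⟩ c).symm
  rw [Finset.sum_add_distrib, hmap, ← Finset.sum_union]
  · exact Finset.sum_le_sum_of_subset_of_nonneg (Finset.subset_univ _) fun d _ _ => hc d
  · refine Finset.disjoint_left.2 fun d hd hd' => ?_
    obtain ⟨e, he, rfl⟩ := Finset.mem_map.1 hd'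
    exact hA e he hd

def dartFlow [DecidableEq D] (G : Dgraph V D) (d : D) : D → ℝ :=
  fun e => (if e = d then 1 else 0) - if e = G.rev d then 1 else 0

theorem antisym_dartFlow [DecidableEq D] (d : D) : G.Antisym (G.dartFlow d) := by
  intro e
  simp only [dartFlow, G.rev_injective.eq_iff, G.rev_involutive.eq_iff, neg_sub]

section Flows

variable [Fintype D] [DecidableEq V]

theorem inflow_add (f g : D → ℝ) (v : V) : G.inflow (f + g) v = G.inflow f v + G.inflow g v :=
  Finset.sum_add_distrib

theorem inflow_sub (f g : D → ℝ) (v : V) : G.inflow (f - g) v = G.inflow f v - G.inflow g v :=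
  Finset.sum_sub_distrib _ _

theorem inflow_reverse {f : D → ℝ} (hf : G.Antisym f) (v : V) :
    G.reverse.inflow f v = - G.inflow f v := by
  rw [inflow, inflow, ← Finset.sum_neg_distrib]
  refine Finset.sum_equiv (G.rev_involutive.toPerm _) (fun d => ?_) (fun d _ => ?_)
  · simp [G.head_rev]
  · simp [hf d]

theorem sum_inflow (h : D → ℝ) (S : Finset V) :
    ∑ v ∈ S, G.inflow h v = ∑ d with G.head d ∈ S, h d := by
  simp only [inflow, Finset.sum_filter]
  rw [Finset.sum_comm]
  exact Finset.sum_congr rfl fun d _ => Finset.sum_ite_eq _ _ _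

open Classical in
theorem sum_entering_eq_zero {h : D → ℝ} (hh : G.Antisym h) {S : Set V}
    (hS : ∀ v ∈ S, G.inflow h v = 0) :
    ∑ d with G.head d ∈ S ∧ G.tail d ∉ S, h d = 0 := by
  set T : Finset V := (Finset.univ.image G.head).filter (· ∈ S)
  have hall : ∑ d with G.head d ∈ S, h d = 0 := by
    have hT : ∀ d, G.head d ∈ T ↔ G.head d ∈ S := by simp [T]
    rw [Finset.filter_congr fun d _ => (hT d).symm, ← sum_inflow]
    exact Finset.sum_eq_zero fun v hv => hS v (Finset.mem_filter.1 hv).2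
  have hinner : ∑ d with G.head d ∈ S ∧ G.tail d ∈ S, h d = 0 :=
    sum_eq_zero_of_antisym hh fun d hd => by
      simp only [Finset.mem_filter, Finset.mem_univ, true_and, G.head_rev, G.tail_rev] at hd ⊢
      exact hd.symm
  rw [← Finset.sum_filter_add_sum_filter_not _ (fun d => G.tail d ∈ S), Finset.filter_filter,
    Finset.filter_filter, hinner, zero_add] at hall
  exact hall

structure FeasibleFlow (G : Dgraph V D) (cap : D → ℝ) (a b : V) (g : D → ℝ) : Prop where
  antisym : G.Antisym g
  le : g ≤ cap
  conserved : ∀ v, v ≠ a → v ≠ b → G.inflow g v = 0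

namespace FeasibleFlow

variable {cap g : D → ℝ} {a b : V}

theorem symm (hg : G.FeasibleFlow cap a b g) : G.FeasibleFlow cap b a g :=
  ⟨hg.antisym, hg.le, fun v hb ha => hg.conserved v ha hb⟩

theorem reverse (hg : G.FeasibleFlow cap a b g) : G.reverse.FeasibleFlow cap a b g :=
  ⟨hg.antisym, hg.le, fun v ha hb => by
    rw [inflow_reverse hg.antisym, hg.conserved v ha hb, neg_zero]⟩

theorem inflow_add_inflow (hg : G.FeasibleFlow cap a b g) (hab : a ≠ b) :
    G.inflow g a + G.inflow g b = 0 := by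
  set T : Finset V := insert a (insert b (Finset.univ.image G.head))
  have hT : ∑ v ∈ T, G.inflow g v = 0 := by
    rw [sum_inflow, Finset.filter_true_of_mem fun d _ => by simp [T]]
    exact sum_eq_zero_of_antisym hg.antisym fun d _ => Finset.mem_univ _
  rw [← Finset.sum_pair hab, ← hT]
  refine Finset.sum_subset (by simp [T, Finset.insert_subset_insert]) fun v _ hv => ?_
  simp only [Finset.mem_insert, Finset.mem_singleton, not_or] at hv
  exact hg.conserved v hv.1 hv.2

open Classical in
/-- Pushing `g` cannot create residual paths out of a residually closed set avoiding `a` and `b`: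
`g` is at most the residual capacity there, hence nonpositive on the darts leaving the set, and
the net flow leaving the set vanishes, so `g` vanishes on them. -/
theorem resReach_of_resReach_sub_left (hg : G.FeasibleFlow cap a b g) {u z : V}
    (ha : ¬ G.ResReach cap u a) (hb : ¬ G.ResReach cap u b)
    (h : G.ResReach (cap - g) u z) : G.ResReach cap u z := by
  set S : Set V := {v | G.ResReach cap u v}
  have hclosed : ∀ d, G.tail d ∈ S → G.head d ∉ S → cap d ≤ 0 :=
    fun d ht hh => not_lt.1 fun hd => hh (Relation.ReflTransGen.tail ht ⟨d, rfl, rfl, hd⟩)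
  have hleaving : ∑ d with G.tail d ∈ S ∧ G.head d ∉ S, g d = 0 :=
    G.reverse.sum_entering_eq_zero hg.antisym fun v hv => by
      rw [inflow_reverse hg.antisym,
        hg.conserved v (fun h => ha (h ▸ hv)) (fun h => hb (h ▸ hv)), neg_zero]
  have hg0 := (Finset.sum_eq_zero_iff_of_nonpos fun d hd => (hg.le d).trans
    (hclosed d (Finset.mem_filter.1 hd).2.1 (Finset.mem_filter.1 hd).2.2)).1 hleaving
  by_contra hz
  obtain ⟨d, hd, hdh, hdt, -⟩ := h.exists_entering (S := Sᶜ) (fun h => h .refl) hz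
  have hdt : G.tail d ∈ S := not_not.1 hdt
  have hgd := hg0 d (Finset.mem_filter.2 ⟨Finset.mem_univ d, hdt, hdh⟩)
  have := hclosed d hdt hdh
  simp only [Pi.sub_apply, hgd, sub_zero] at hd
  linarith

theorem resReach_of_resReach_sub_right (hg : G.FeasibleFlow cap a b g) {u z : V}
    (ha : ¬ G.ResReach cap a z) (hb : ¬ G.ResReach cap b z)
    (h : G.ResReach (cap - g) u z) : G.ResReach cap u z := by
  rw [← resReach_reverse] at ha hb h ⊢
  exact hg.reverse.resReach_of_resReach_sub_left ha hb h

end FeasibleFlow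

theorem MaxLimFlow.feasibleFlow {cap g : D → ℝ} {a b : V} {x : ℝ}
    (hml : G.MaxLimFlow cap a b x g) : G.FeasibleFlow cap a b g :=
  ⟨hml.1, hml.2.1, hml.2.2.1⟩

theorem inflow_dartFlow [DecidableEq D] (d : D) (v : V) :
    G.inflow (G.dartFlow d) v =
      (if G.head d = v then 1 else 0) - if G.tail d = v then 1 else 0 := by
  simp only [inflow, dartFlow, Finset.sum_sub_distrib, Finset.sum_ite_eq', Finset.mem_filter,
    Finset.mem_univ, true_and, G.head_rev]

theorem ResReach.exists_unitFlow {r : D → ℝ} {a z : V} (h : G.ResReach r a z) :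
    ∃ χ : D → ℝ, G.Antisym χ ∧
      (∀ v, G.inflow χ v = (if v = z then 1 else 0) - if v = a then 1 else 0) ∧
      ∀ d, 0 < χ d → 0 < r d := by
  classical
  induction h with
  | refl =>
    exact ⟨0, fun d => by simp, fun v => by simp [inflow], fun d hd => absurd hd (lt_irrefl 0)⟩
  | @tail c z _ hstep ih =>
    obtain ⟨χ, hχ, hχin, hχr⟩ := ih
    obtain ⟨d, rfl, rfl, hd⟩ := hstep
    refine ⟨χ + G.dartFlow d, hχ.add (antisym_dartFlow d), fun v => ?_, fun e he => ?_⟩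
    · rw [inflow_add, hχin, inflow_dartFlow]
      simp only [eq_comm (a := v)]
      ring
    · by_cases hed : e = d
      · exact hed ▸ hd
      · refine hχr e (lt_of_lt_of_le he ?_)
        simp only [Pi.add_apply, dartFlow, if_neg hed]
        split_ifs <;> linarith

theorem MaxLimFlow.not_resReach {cap g : D → ℝ} {a b : V} {x : ℝ}
    (hml : G.MaxLimFlow cap a b x g) (hab : a ≠ b) (hlt : G.inflow g b < x) :
    ¬ G.ResReach (cap - g) a b := by
  obtain ⟨hg, hgle, hgcons, -, hgmax⟩ := hml
  intro h
  obtain ⟨χ, hχ, hχin, hχr⟩ := h.exists_unitFlow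
  obtain ⟨ε, hεcap, hεx, hε⟩ :=
    ((eventually_mul_le (fun d => sub_nonneg.2 (hgle d)) hχr).and
      ((eventually_nhdsWithin_of_eventually_nhds (gt_mem_nhds (sub_pos.2 hlt))).and
        self_mem_nhdsWithin)).exists
  have hin : ∀ v, G.inflow (fun d => g d + ε * χ d) v = G.inflow g v + ε * G.inflow χ v :=
    fun v => by simp only [inflow, Finset.sum_add_distrib, Finset.mul_sum]
  have hinb : G.inflow (fun d => g d + ε * χ d) b = G.inflow g b + ε := by
    rw [hin, hχin, if_pos rfl, if_neg hab.symm, sub_zero, mul_one]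
  have hmax := hgmax (fun d => g d + ε * χ d) (fun d => by simp only [hg d, hχ d]; ring)
    (fun d => by linarith [hεcap d, Pi.sub_apply cap g d])
    (fun v ha hb => by rw [hin, hgcons v ha hb, hχin]; simp [ha, hb])
    (by linarith)
  linarith

/-- The push of one iteration of `FixStep`, cancelling the inflow `x` at `a`. -/
def PushFlow (G : Dgraph V D) (cap : D → ℝ) (a b : V) (x : ℝ) (g : D → ℝ) : Prop :=
  (0 < x ∧ G.MaxLimFlow cap a b x g) ∨ (x ≤ 0 ∧ G.MaxLimFlow cap b a (-x) g)

namespace PushFlow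

variable {cap g : D → ℝ} {a b : V} {x : ℝ}

theorem feasibleFlow (h : G.PushFlow cap a b x g) : G.FeasibleFlow cap a b g := by
  rcases h with ⟨-, hml⟩ | ⟨-, hml⟩
  exacts [hml.feasibleFlow, hml.feasibleFlow.symm]

theorem not_resReach_of_pos (h : G.PushFlow cap a b x g) (hab : a ≠ b)
    (hpos : 0 < x + G.inflow g a) : ¬ G.ResReach (cap - g) a b := by
  have hsum := h.feasibleFlow.inflow_add_inflow hab
  rcases h with ⟨-, hml⟩ | ⟨hx, hml⟩
  · exact hml.not_resReach hab (by linarith)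
  · linarith [hml.2.2.2.1]

theorem not_resReach_of_neg (h : G.PushFlow cap a b x g) (hab : a ≠ b)
    (hneg : x + G.inflow g a < 0) : ¬ G.ResReach (cap - g) b a := by
  have hsum := h.feasibleFlow.inflow_add_inflow hab
  rcases h with ⟨-, hml⟩ | ⟨-, hml⟩
  · linarith [hml.2.2.2.1]
  · exact hml.not_resReach hab.symm (by linarith)

end PushFlow

open Classical in
/-- By conservation on `S`, the deficit `(F - f0) d₀ ≤ -∑ c0` is balanced by the other darts
entering `S`; each carries at most `c0 e + c0 (rev e)` more than `f0`, and these bounds add up to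
at most `∑ c0`, so all of them are attained. -/
theorem le_of_entering_of_rev_overloaded {c0 F f0 : D → ℝ} (hc0 : ∀ d, 0 ≤ c0 d)
    (hF : G.Antisym F) (hf0 : G.Pseudoflow c0 f0) {S : Set V}
    (hS : ∀ v ∈ S, G.inflow F v = G.inflow f0 v) {d₀ : D} (hd₀ : G.head d₀ ∈ S)
    (hd₀' : G.tail d₀ ∉ S) (hover : c0 (G.rev d₀) + ∑ d, c0 d ≤ F (G.rev d₀))
    (hle : ∀ e, G.head e ∈ S → G.tail e ∉ S → e ≠ d₀ → F e ≤ c0 e)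
    {e : D} (he : G.head e ∈ S) (he' : G.tail e ∉ S) (hne : e ≠ d₀) : c0 e ≤ F e := by
  by_contra! hlt
  set A := (Finset.univ.filter fun d => G.head d ∈ S ∧ G.tail d ∉ S).erase d₀
  have hmemA : ∀ {d}, d ∈ A ↔ d ≠ d₀ ∧ G.head d ∈ S ∧ G.tail d ∉ S := by simp [A]
  have hbal : (F - f0) d₀ + ∑ d ∈ A, (F - f0) d = 0 := by
    rw [Finset.add_sum_erase _ _ (by simp [hd₀, hd₀'])]
    exact sum_entering_eq_zero (hF.sub hf0.1) fun v hv => by rw [inflow_sub, hS v hv, sub_self]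
  have hrev : ∀ d, -f0 d ≤ c0 (G.rev d) := fun d => by linarith [hf0.2 (G.rev d), hf0.1 d]
  have hd₀le : (F - f0) d₀ ≤ -∑ d, c0 d := by
    simp only [Pi.sub_apply]
    linarith [hF d₀, hrev d₀]
  have hA : ∑ d ∈ A, (F - f0) d < ∑ d ∈ A, (c0 d + c0 (G.rev d)) := by
    refine Finset.sum_lt_sum (fun d hd => ?_) ⟨e, hmemA.2 ⟨hne, he, he'⟩, ?_⟩
    · obtain ⟨h1, h2, h3⟩ := hmemA.1 hd
      simp only [Pi.sub_apply]
      linarith [hle d h2 h3 h1, hrev d]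
    · simp only [Pi.sub_apply]
      linarith [hrev e]
  have hcap := sum_add_rev_le hc0 (A := A) fun d hd hd' =>
    (hmemA.1 hd').2.2 (by rw [G.tail_rev]; exact (hmemA.1 hd).2.1)
  linarith

/-- What the invariant needs from one iteration that turns the flow `F` with capacities `κ₀` into
`F'` with capacities `κ`, fixing `a` by a push between `a` and `b`. -/
structure PushStep (G : Dgraph V D) (κ₀ κ : D → ℝ) (a b : V) (F F' : D → ℝ) : Prop where
  antisym : G.Antisym F'
  le : F' ≤ κ
  inflow_eq : ∀ v, v ≠ a → v ≠ b → G.inflow F' v = G.inflow F v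
  resReach_of_resReach_left : ∀ {u z}, ¬ G.ResReach (κ₀ - F) u a →
    ¬ G.ResReach (κ₀ - F) u b → G.ResReach (κ - F') u z → G.ResReach (κ₀ - F) u z
  resReach_of_resReach_right : ∀ {u z}, ¬ G.ResReach (κ₀ - F) a z →
    ¬ G.ResReach (κ₀ - F) b z → G.ResReach (κ - F') u z → G.ResReach (κ₀ - F) u z
  not_resReach_of_pos : 0 < G.inflow F' a → ¬ G.ResReach (κ - F') a b
  not_resReach_of_neg : G.inflow F' a < 0 → ¬ G.ResReach (κ - F') b a

theorem PushStep.of_push {κ₀ κ F t g : D → ℝ} {a b : V} (hab : a ≠ b) (ht : G.Antisym t)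
    (hres : ∀ d, 0 < κ d - t d → 0 < κ₀ d - F d)
    (htin : ∀ v, v ≠ a → v ≠ b → G.inflow t v = G.inflow F v)
    (hg : G.PushFlow (κ - t) a b (G.inflow t a) g) : G.PushStep κ₀ κ a b F (t + g) := by
  have hfeas := hg.feasibleFlow
  have hmono : ∀ {u v}, G.ResReach (κ - t) u v → G.ResReach (κ₀ - F) u v :=
    fun h => h.mono hres
  have hsub : κ - (t + g) = κ - t - g := sub_add_eq_sub_sub κ t g
  have hin : G.inflow (t + g) a = G.inflow t a + G.inflow g a := inflow_add t g a
  refine ⟨ht.add hfeas.antisym, fun d => ?_, fun v ha hb => ?_, fun ha hb h => ?_,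
    fun ha hb h => ?_, fun hpos => ?_, fun hneg => ?_⟩
  · linarith [hfeas.le d, Pi.add_apply t g d, Pi.sub_apply κ t d]
  · rw [inflow_add, htin v ha hb, hfeas.conserved v ha hb, add_zero]
  · rw [hsub] at h
    exact hmono (hfeas.resReach_of_resReach_sub_left (mt hmono ha) (mt hmono hb) h)
  · rw [hsub] at h
    exact hmono (hfeas.resReach_of_resReach_sub_right (mt hmono ha) (mt hmono hb) h)
  · rw [hsub]
    exact hg.not_resReach_of_pos hab (hin ▸ hpos)
  · rw [hsub]
    exact hg.not_resReach_of_neg hab (hin ▸ hneg)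

theorem PushStep.inflow_path_of_lt {κ₀ κ F F' : D → ℝ} {k : ℕ} {p : Fin (k+1) → V}
    (hp : Function.Injective p) {i : Fin k}
    (hs : G.PushStep κ₀ κ (p i.castSucc) (p i.succ) F F') (l : Fin (k+1)) (hl : (l : ℕ) < i) :
    G.inflow F' (p l) = G.inflow F (p l) :=
  hs.inflow_eq _ (hp.ne (Fin.ne_of_val_ne (by simp; omega)))
    (hp.ne (Fin.ne_of_val_ne (by simp; omega)))

end Flows

section FixCaps

variable [DecidableEq D] {c0 : D → ℝ} {M : ℝ} {k : ℕ} {dP : Fin k → D}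

theorem self_le_fixCaps (hM : 0 ≤ M) (s : ℕ) (d : D) : c0 d ≤ G.fixCaps c0 M dP s d := by
  unfold fixCaps
  split_ifs <;> linarith

theorem fixCaps_antitone (hM : 0 ≤ M) {s s' : ℕ} (h : s ≤ s') (d : D) :
    G.fixCaps c0 M dP s' d ≤ G.fixCaps c0 M dP s d := by
  unfold fixCaps
  split_ifs with h1 h2 <;> try linarith
  obtain ⟨j, hj, hd⟩ := h1
  exact absurd ⟨j, h.trans hj, hd⟩ h2

theorem fixCaps_eq_of_forall_ne {s : ℕ} {d : D}
    (h : ∀ j : Fin k, s ≤ j → d ≠ dP j ∧ d ≠ G.rev (dP j)) :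
    G.fixCaps c0 M dP s d = c0 d := by
  rw [fixCaps, if_neg, add_zero]
  rintro ⟨j, hj, hd | hd⟩
  exacts [(h j hj).1 hd, (h j hj).2 hd]

theorem fixCaps_last : G.fixCaps c0 M dP k = c0 :=
  funext fun _ => fixCaps_eq_of_forall_ne fun j hj => absurd j.isLt (not_lt.2 hj)

theorem fixCaps_rev_dP {s : ℕ} {j : Fin k} (h : s ≤ j) :
    G.fixCaps c0 M dP s (G.rev (dP j)) = c0 (G.rev (dP j)) + M := by
  rw [fixCaps, if_pos ⟨j, h, Or.inr rfl⟩]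

theorem fixCaps_reverse :
    G.reverse.fixCaps c0 M (fun j => G.rev (dP j)) = G.fixCaps c0 M dP := by
  funext s d
  simp only [fixCaps, reverse_rev, G.rev_rev, or_comm]

end FixCaps

section Truncation

variable [DecidableEq D] {κ f : D → ℝ} {d₀ : D}

theorem truncAt_apply_self :
    G.truncAt κ f d₀ d₀ = - min (- min (f d₀) (κ d₀)) (κ (G.rev d₀)) := by
  simp only [truncAt, Function.update_self]

theorem truncAt_apply_rev (hne : G.rev d₀ ≠ d₀) :
    G.truncAt κ f d₀ (G.rev d₀) = min (- min (f d₀) (κ d₀)) (κ (G.rev d₀)) := by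
  simp only [truncAt, Function.update_self, Function.update_of_ne hne]

theorem truncAt_apply_of_ne {d : D} (h1 : d ≠ d₀) (h2 : d ≠ G.rev d₀) :
    G.truncAt κ f d₀ d = f d := by
  simp only [truncAt, Function.update_of_ne h1, Function.update_of_ne h2]

theorem truncAt_antisym (hne : G.rev d₀ ≠ d₀) (hf : G.Antisym f) :
    G.Antisym (G.truncAt κ f d₀) := by
  intro d
  by_cases h1 : d = d₀
  · rw [h1, truncAt_apply_rev hne, truncAt_apply_self, neg_neg]
  by_cases h2 : d = G.rev d₀
  · rw [h2, G.rev_rev, truncAt_apply_rev hne, truncAt_apply_self]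
  rw [truncAt_apply_of_ne h1 h2, truncAt_apply_of_ne (fun h => h2 (by rw [← h, G.rev_rev]))
    (fun h => h1 (G.rev_injective h)), hf d]

theorem min_le_truncAt (hne : G.rev d₀ ≠ d₀) (hf : G.Antisym f) (d : D) :
    min (f d) (κ d) ≤ G.truncAt κ f d₀ d := by
  by_cases h1 : d = d₀
  · rw [h1, truncAt_apply_self, le_neg]
    exact min_le_left _ _
  by_cases h2 : d = G.rev d₀
  · rw [h2, truncAt_apply_rev hne, hf d₀]
    exact min_le_min_right _ (neg_le_neg (min_le_left _ _))
  rw [truncAt_apply_of_ne h1 h2]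
  exact min_le_left _ _

theorem inflow_truncAt [Fintype D] [DecidableEq V] {v : V}
    (hh : G.head d₀ ≠ v) (ht : G.tail d₀ ≠ v) :
    G.inflow (G.truncAt κ f d₀) v = G.inflow f v := by
  refine Finset.sum_congr rfl fun d hd => truncAt_apply_of_ne ?_ ?_
  · rintro rfl
    exact hh (Finset.mem_filter.1 hd).2
  · rintro rfl
    exact ht (by simpa [G.head_rev] using (Finset.mem_filter.1 hd).2)

end Truncation

section Path

variable [DecidableEq D] {c0 : D → ℝ} {M : ℝ} {k : ℕ} {p : Fin (k+1) → V}
  {dP : Fin k → D}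

theorem fixCaps_of_entering (hp : Function.Injective p)
    (hdt : ∀ i, G.tail (dP i) = p i.castSucc) (hdh : ∀ i, G.head (dP i) = p i.succ)
    (s : ℕ) {j : Fin k} {e : D} (he : G.head e ∈ p '' {l | (j : ℕ) < l})
    (he' : G.tail e ∉ p '' {l | (j : ℕ) < l}) (hne : e ≠ dP j) :
    G.fixCaps c0 M dP s e = c0 e := by
  refine fixCaps_eq_of_forall_ne fun l _ => ⟨?_, ?_⟩ <;> rintro rfl
  · rw [hdh, hp.mem_set_image] at he
    rw [hdt, hp.mem_set_image] at he'
    simp only [Set.mem_ofPred_eq, Fin.val_succ, Fin.val_castSucc] at he he'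
    exact hne (congrArg dP (Fin.ext (by omega)))
  · rw [G.head_rev, hdt, hp.mem_set_image] at he
    rw [G.tail_rev, hdh, hp.mem_set_image] at he'
    simp only [Set.mem_ofPred_eq, Fin.val_succ, Fin.val_castSucc] at he he'
    omega

variable [Fintype D] [DecidableEq V]

/-- While `rev (dP j)` has residual capacity the path can be walked back; once it is saturated,
every other dart entering `{p l | j < l}` is saturated too, so the path entered through `dP j`. -/
theorem resReach_castSucc_of_resReach_succ (hc0 : ∀ d, 0 ≤ c0 d) (hM : M = ∑ d, c0 d)
    (hp : Function.Injective p)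
    (hdt : ∀ i, G.tail (dP i) = p i.castSucc) (hdh : ∀ i, G.head (dP i) = p i.succ)
    {f0 F : D → ℝ} (hf0 : G.Pseudoflow c0 f0) (hF : G.Antisym F) {s : ℕ}
    (hFle : F ≤ G.fixCaps c0 M dP s) {j : Fin k} (hsj : s ≤ j)
    (hinfl : ∀ l : Fin (k+1), (j : ℕ) < l → G.inflow F (p l) = G.inflow f0 (p l))
    {u : V} (hu : ∀ l : Fin (k+1), (j : ℕ) < l → p l ≠ u)
    (h : G.ResReach (G.fixCaps c0 M dP s - F) u (p j.succ)) :
    G.ResReach (G.fixCaps c0 M dP s - F) u (p j.castSucc) := by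
  by_cases hrev : 0 < (G.fixCaps c0 M dP s - F) (G.rev (dP j))
  · exact h.tail ⟨G.rev (dP j), by rw [G.tail_rev, hdh], by rw [G.head_rev, hdt], hrev⟩
  set U : Set V := p '' {l | (j : ℕ) < l}
  have hcap : ∀ e, G.head e ∈ U → G.tail e ∉ U → e ≠ dP j →
      G.fixCaps c0 M dP s e = c0 e :=
    fun _ => fixCaps_of_entering hp hdt hdh s
  have hjU : G.head (dP j) ∈ U := by simp [U, hdh, hp.mem_set_image]
  have hjU' : G.tail (dP j) ∉ U := by simp [U, hdt, hp.mem_set_image]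
  obtain ⟨d, hd, hdU, hdU', hreach⟩ :=
    h.exists_entering (S := U) (fun ⟨l, hl, hlu⟩ => hu l hl hlu) (by simp [U, hp.mem_set_image])
  obtain rfl : d = dP j := by
    by_contra hne
    have hover : c0 (G.rev (dP j)) + ∑ d, c0 d ≤ F (G.rev (dP j)) := by
      simp only [Pi.sub_apply, fixCaps_rev_dP hsj, not_lt] at hrev
      linarith
    have := le_of_entering_of_rev_overloaded hc0 hF hf0 (S := U)
      (fun v ⟨l, hl, hlv⟩ => hlv ▸ hinfl l hl) hjU hjU' hover
      (fun e h1 h2 h3 => hcap e h1 h2 h3 ▸ hFle e) hdU hdU' hne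
    simp only [Pi.sub_apply, hcap d hdU hdU' hne] at hd
    linarith
  rwa [hdt] at hreach

theorem resReach_to_stage (hc0 : ∀ d, 0 ≤ c0 d) (hM : M = ∑ d, c0 d)
    (hp : Function.Injective p)
    (hdt : ∀ i, G.tail (dP i) = p i.castSucc) (hdh : ∀ i, G.head (dP i) = p i.succ)
    {f0 F : D → ℝ} (hf0 : G.Pseudoflow c0 f0) (hF : G.Antisym F) {s : ℕ} (hs : s ≤ k)
    (hFle : F ≤ G.fixCaps c0 M dP s)
    (hinfl : ∀ l : Fin (k+1), s < l → G.inflow F (p l) = G.inflow f0 (p l))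
    {u : V} (hu : ∀ l : Fin (k+1), s < l → p l ≠ u) {l : Fin (k+1)} (hl : s ≤ l)
    (h : G.ResReach (G.fixCaps c0 M dP s - F) u (p l)) :
    G.ResReach (G.fixCaps c0 M dP s - F) u (p ⟨s, Nat.lt_succ_of_le hs⟩) := by
  obtain ⟨n, hn⟩ := Nat.exists_eq_add_of_le hl
  induction n generalizing l with
  | zero => rwa [show l = ⟨s, _⟩ from Fin.ext hn] at h
  | succ n ih =>
    have hj : s + n < k := by omega
    refine ih (l := ⟨s + n, by omega⟩) (by simp) (resReach_castSucc_of_resReach_succ hc0 hM hp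
      hdt hdh hf0 hF hFle (j := ⟨s + n, hj⟩) (by simp)
      (fun l' hl' => hinfl l' (by simp only at hl'; omega))
      (fun l' hl' => hu l' (by simp only at hl'; omega)) ?_) rfl
    rwa [show l = Fin.succ ⟨s + n, hj⟩ from Fin.ext (by simp; omega)] at h

theorem resReach_from_stage (hc0 : ∀ d, 0 ≤ c0 d) (hM : M = ∑ d, c0 d)
    (hp : Function.Injective p)
    (hdt : ∀ i, G.tail (dP i) = p i.castSucc) (hdh : ∀ i, G.head (dP i) = p i.succ)
    {f0 F : D → ℝ} (hf0 : G.Pseudoflow c0 f0) (hF : G.Antisym F) {s : ℕ} (hs : s ≤ k)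
    (hFle : F ≤ G.fixCaps c0 M dP s)
    (hinfl : ∀ l : Fin (k+1), s < l → G.inflow F (p l) = G.inflow f0 (p l))
    {z : V} (hz : ∀ l : Fin (k+1), s < l → p l ≠ z) {l : Fin (k+1)} (hl : s ≤ l)
    (h : G.ResReach (G.fixCaps c0 M dP s - F) (p l) z) :
    G.ResReach (G.fixCaps c0 M dP s - F) (p ⟨s, Nat.lt_succ_of_le hs⟩) z := by
  rw [← resReach_reverse, ← fixCaps_reverse] at h ⊢
  refine resReach_to_stage (G := G.reverse) (dP := fun j => G.rev (dP j)) hc0 hM hp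
    (fun i => by simp [G.head_rev, hdt]) (fun i => by simp [G.tail_rev, hdh]) hf0 hF hs
    (by rwa [fixCaps_reverse]) (fun l hl => ?_) hz hl h
  rw [inflow_reverse hF, inflow_reverse hf0.1, hinfl l hl]

theorem FixStep.pushStep (hM : 0 ≤ M) (hp : Function.Injective p)
    (hdt : ∀ i, G.tail (dP i) = p i.castSucc) (hdh : ∀ i, G.head (dP i) = p i.succ)
    {i : Fin k} {F F' : D → ℝ} (hF : G.Antisym F)
    (h : G.FixStep c0 M p dP i F F') :
    G.PushStep (G.fixCaps c0 M dP i) (G.fixCaps c0 M dP (i + 1)) (p i.castSucc) (p i.succ)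
      F F' := by
  obtain ⟨t, g, rfl, hg, rfl⟩ := h
  have hab : p i.castSucc ≠ p i.succ := hp.ne (Fin.ne_of_val_ne (by simp))
  have hne : G.rev (dP i) ≠ dP i := fun h => hab (by rw [← hdt, ← h, G.tail_rev, hdh])
  refine PushStep.of_push (t := G.truncAt (G.fixCaps c0 M dP (i + 1)) F (dP i)) (g := g) hab
    (truncAt_antisym hne hF) (fun d hd => ?_)
    (fun v ha hb => inflow_truncAt (by rwa [hdh, ne_comm]) (by rwa [hdt, ne_comm])) hg
  have hmin := (min_le_truncAt (κ := G.fixCaps c0 M dP (i + 1)) hne hF d).trans_lt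
    (sub_pos.1 hd)
  have hanti := fixCaps_antitone (G := G) (c0 := c0) (dP := dP) hM (Nat.le_succ i) d
  rcases min_lt_iff.1 hmin with hlt | hlt
  · linarith
  · exact absurd hlt (lt_irrefl _)

/-- The invariant after `m` iterations, with current flow `F`; the nodes `p i`, `i < m`, are
the fixed ones. -/
structure FixInv (G : Dgraph V D) (c0 : D → ℝ) (M : ℝ) {k : ℕ} (p : Fin (k+1) → V)
    (dP : Fin k → D) (f0 F : D → ℝ) (m : ℕ) : Prop where
  antisym : G.Antisym F
  le_fixCaps : F ≤ G.fixCaps c0 M dP m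
  inflow_eq : ∀ v, (∀ l : Fin (k+1), (l : ℕ) ≤ m → p l ≠ v) →
    G.inflow F v = G.inflow f0 v
  pos_sep : ∀ i l : Fin (k+1), (i : ℕ) < m → m ≤ (l : ℕ) → 0 < G.inflow F (p i) →
    ¬ G.ResReach (G.fixCaps c0 M dP m - F) (p i) (p l)
  neg_sep : ∀ i l : Fin (k+1), (i : ℕ) < m → m ≤ (l : ℕ) → G.inflow F (p i) < 0 →
    ¬ G.ResReach (G.fixCaps c0 M dP m - F) (p l) (p i)
  cross_sep : ∀ i j : Fin (k+1), (i : ℕ) < m → (j : ℕ) < m → 0 < G.inflow F (p i) →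
    G.inflow F (p j) < 0 → ¬ G.ResReach (G.fixCaps c0 M dP m - F) (p i) (p j)

theorem FixInv.zero {f0 : D → ℝ} (hM : 0 ≤ M) (hf0 : G.Pseudoflow c0 f0) :
    G.FixInv c0 M p dP f0 f0 0 :=
  ⟨hf0.1, fun d => (hf0.2 d).trans (self_le_fixCaps hM 0 d), fun _ _ => rfl,
    fun _ _ hi => absurd hi (Nat.not_lt_zero _), fun _ _ hi => absurd hi (Nat.not_lt_zero _),
    fun _ _ hi => absurd hi (Nat.not_lt_zero _)⟩

theorem FixInv.inflow_eq_succ {f0 F F' : D → ℝ} {i : Fin k} (inv : G.FixInv c0 M p dP f0 F i)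
    {κ : D → ℝ} (hs : G.PushStep (G.fixCaps c0 M dP i) κ (p i.castSucc) (p i.succ) F F')
    (v : V)
    (hv : ∀ l : Fin (k+1), (l : ℕ) ≤ i + 1 → p l ≠ v) : G.inflow F' v = G.inflow f0 v :=
  (hs.inflow_eq v (hv _ (by simp)).symm (hv _ (by simp)).symm).trans
    (inv.inflow_eq v fun l hl => hv l (by omega))

theorem FixInv.succ (hc0 : ∀ d, 0 ≤ c0 d) (hM : M = ∑ d, c0 d) (hp : Function.Injective p)
    (hdt : ∀ i, G.tail (dP i) = p i.castSucc) (hdh : ∀ i, G.head (dP i) = p i.succ)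
    {f0 F F' : D → ℝ} (hf0 : G.Pseudoflow c0 f0) {i : Fin k} (inv : G.FixInv c0 M p dP f0 F i)
    (hs : G.PushStep (G.fixCaps c0 M dP i) (G.fixCaps c0 M dP (i + 1)) (p i.castSucc)
      (p i.succ) F F') :
    G.FixInv c0 M p dP f0 F' (i + 1) := by
  have hpne : ∀ l l' : Fin (k+1), (l : ℕ) ≠ l' → p l ≠ p l' :=
    fun l l' h => hp.ne (Fin.ne_of_val_ne h)
  have hfixed : ∀ l : Fin (k+1), (l : ℕ) < i + 1 → (l : ℕ) < i ∨ l = i.castSucc :=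
    fun l hl => (Nat.lt_succ_iff_lt_or_eq.1 hl).imp id fun h => Fin.ext (by simp [h])
  have hold := hs.inflow_path_of_lt hp
  have hnew := inv.inflow_eq_succ hs
  have hlater : ∀ l : Fin (k+1), (i : ℕ) + 1 < l → G.inflow F' (p l) = G.inflow f0 (p l) :=
    fun l hl => hnew _ fun l' hl' => hpne _ _ (by omega)
  have hoff : ∀ l : Fin (k+1), (i : ℕ) + 1 < l → p l ≠ p i.castSucc :=
    fun l hl => hpne _ _ (by simp; omega)
  have hfrom : ∀ j : Fin (k+1), (j : ℕ) < i → 0 < G.inflow F (p j) → ∀ {z},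
      G.ResReach (G.fixCaps c0 M dP (i + 1) - F') (p j) z →
      G.ResReach (G.fixCaps c0 M dP i - F) (p j) z := fun j hj hpos _ =>
    hs.resReach_of_resReach_left (inv.pos_sep j _ hj (by simp) hpos)
      (inv.pos_sep j _ hj (by simp) hpos)
  have hto : ∀ j : Fin (k+1), (j : ℕ) < i → G.inflow F (p j) < 0 → ∀ {u},
      G.ResReach (G.fixCaps c0 M dP (i + 1) - F') u (p j) →
      G.ResReach (G.fixCaps c0 M dP i - F) u (p j) := fun j hj hneg _ =>
    hs.resReach_of_resReach_right (inv.neg_sep j _ hj (by simp) hneg)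
      (inv.neg_sep j _ hj (by simp) hneg)
  refine ⟨hs.antisym, hs.le, hnew, fun j l hj hl hpos h => ?_, fun j l hj hl hneg h => ?_,
    fun j j' hj hj' hpos hneg h => ?_⟩
  · rcases hfixed j hj with hj | rfl
    · rw [hold j hj] at hpos
      exact inv.pos_sep j l hj (by omega) hpos (hfrom j hj hpos h)
    · exact hs.not_resReach_of_pos hpos (resReach_to_stage hc0 hM hp hdt hdh hf0 hs.antisym
        i.isLt hs.le hlater hoff hl h)
  · rcases hfixed j hj with hj | rfl
    · rw [hold j hj] at hneg
      exact inv.neg_sep j l hj (by omega) hneg (hto j hj hneg h)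
    · exact hs.not_resReach_of_neg hneg (resReach_from_stage hc0 hM hp hdt hdh hf0 hs.antisym
        i.isLt hs.le hlater hoff hl h)
  · rcases hfixed j' hj' with hj' | rfl <;> rcases hfixed j hj with hj | rfl
    · rw [hold j hj] at hpos
      rw [hold j' hj'] at hneg
      exact inv.cross_sep j j' hj hj' hpos hneg (hto j' hj' hneg h)
    · rw [hold j' hj'] at hneg
      exact inv.neg_sep j' _ hj' (by simp) hneg (hto j' hj' hneg h)
    · rw [hold j hj] at hpos
      exact inv.pos_sep j _ hj (by simp) hpos (hfrom j hj hpos h)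
    · linarith

end Path

end Dgraph

/-- correctness of the abstract path-fixing algorithm: the final flow is a
pseudoflow, differs from `f0` by a flow conserved off the path, and leaves no residual
path from positive-inflow path nodes to negative-inflow path nodes. -/
theorem stmt14 {V D : Type} [Fintype D] [DecidableEq V] [DecidableEq D]
    (G : Dgraph V D) (c0 : D → ℝ) (hc0 : ∀ d, 0 ≤ c0 d)
    (k : ℕ) (p : Fin (k+1) → V) (hp : Function.Injective p)
    (dP : Fin k → D)
    (hdt : ∀ i, G.tail (dP i) = p i.castSucc) (hdh : ∀ i, G.head (dP i) = p i.succ)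
    (f0 : D → ℝ) (hf0 : G.Pseudoflow c0 f0)
    (M : ℝ) (hM : M = ∑ d : D, c0 d)
    (f : ℕ → D → ℝ) (hinit : f 0 = f0)
    (hstep : ∀ i : Fin k, G.FixStep c0 M p dP i (f (i : ℕ)) (f ((i : ℕ) + 1))) :
    G.Pseudoflow c0 (f k) ∧
    (∀ v, (∀ j : Fin (k+1), p j ≠ v) → G.inflow (f k) v = G.inflow f0 v) ∧
    (∀ j j' : Fin (k+1), 0 < G.inflow (f k) (p j) → G.inflow (f k) (p j') < 0 →
      ¬ G.ResReach (fun d => c0 d - f k d) (p j) (p j')) := by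
  have hM0 : 0 ≤ M := hM ▸ Finset.sum_nonneg fun d _ => hc0 d
  have hinv : ∀ m, m ≤ k → G.FixInv c0 M p dP f0 (f m) m := by
    intro m hm
    induction m with
    | zero =>
      rw [hinit]
      exact Dgraph.FixInv.zero hM0 hf0
    | succ m ih =>
      have inv := ih (by omega)
      exact inv.succ hc0 hM hp hdt hdh hf0 (i := ⟨m, hm⟩)
        ((hstep ⟨m, hm⟩).pushStep hM0 hp hdt hdh inv.antisym)
  have inv := hinv k le_rfl
  have hres : (fun d => c0 d - f k d) = G.fixCaps c0 M dP k - f k := by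
    rw [Dgraph.fixCaps_last]
    rfl
  refine ⟨⟨inv.antisym, fun d => (inv.le_fixCaps d).trans_eq
    (congrFun Dgraph.fixCaps_last d)⟩,
    fun v hv => inv.inflow_eq v fun l _ => hv l, fun j j' hj hj' => hres ▸ ?_⟩
  rcases Nat.lt_or_ge j k with hjk | hjk <;> rcases Nat.lt_or_ge j' k with hj'k | hj'k
  · exact inv.cross_sep j j' hjk hj'k hj hj'
  · exact inv.pos_sep j j' hjk hj'k hj
  · exact inv.neg_sep j' j hj'k hjk hj'
  · obtain rfl : j = j' := Fin.ext (by omega)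
    linarith
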